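/- arXiv:2208.00026 — 4 statements merged into one kernel-verified Lean document; each statement's English description precedes it below -/
import Mathlib

section
/- Let E be a real normed vector space and H : ℝ × ℝ × E → ℝ a differentiable function that is independent of the first coordinate. Define vector fields on ℝ × ℝ × E by T(p) = ((H(p)+1)/2, −1, 0) and JT(p) = ((H(p)−1)/2, −1, 0). Then for every v ∈ E, the constant vector field X ≡ (0, 0, v) satisfies [X, T] = [X, JT] = ((∂_v H)/2)·(T − JT), where ∂_v H(p) denotes the derivative of H at p in the direction (0,0,v) and T − JT is the constant vector field (1, 0, 0). -/
/-! For a constant field `X ≡ c` the bracket reduces to `[X, Y](p) = (DY)_p c`. Both `T` and `JT`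
are `(H/2, −1, 0)` shifted by a constant, so both brackets equal `(∂_v H / 2, 0, 0)`, and
`T − JT ≡ (1, 0, 0)`. -/

/-- The Lie bracket of two differentiable vector fields `X, Y` on a real
normed vector space `F`: `[X, Y](p) = (DY)_p(X(p)) − (DX)_p(Y(p))`. -/
noncomputable def lieBracketVF {F : Type*} [NormedAddCommGroup F] [NormedSpace ℝ F]
    (X Y : F → F) : F → F :=
  fun p => fderiv ℝ Y p (X p) - fderiv ℝ X p (Y p)

theorem lieBracketVF_const_left {F : Type*} [NormedAddCommGroup F] [NormedSpace ℝ F]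
    (c : F) (Y : F → F) :
    lieBracketVF (fun _ => c) Y = fun p => fderiv ℝ Y p c := by
  funext p
  simp only [lieBracketVF, fderiv_const_apply, zero_apply, sub_zero]

theorem fderiv_prodMk_const_apply {F G : Type*} [NormedAddCommGroup F] [NormedSpace ℝ F]
    [NormedAddCommGroup G] [NormedSpace ℝ G] {f : F → ℝ} {p : F}
    (hf : DifferentiableAt ℝ f p) (b : G) (w : F) :
    fderiv ℝ (fun q => (f q, b)) p w = (fderiv ℝ f p w, 0) := by
  rw [hf.fderiv_prodMk (differentiableAt_const b)]
  simp

theorem lieBracketVF_const_prodMk {G : Type*} [NormedAddCommGroup G] [NormedSpace ℝ G]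
    {f : ℝ × G → ℝ} (hf : Differentiable ℝ f) (c : ℝ × G) (b : G) :
    lieBracketVF (fun _ => c) (fun q => (f q, b)) =
      fun p => fderiv ℝ f p c • ((1 : ℝ), (0 : G)) := by
  rw [lieBracketVF_const_left]
  funext p
  rw [fderiv_prodMk_const_apply (hf p)]
  simp

theorem fderiv_add_const_div_apply {F : Type*} [NormedAddCommGroup F] [NormedSpace ℝ F]
    {f : F → ℝ} {p : F} (hf : DifferentiableAt ℝ f p) (k d : ℝ) (w : F) :
    fderiv ℝ (fun q => (f q + k) / d) p w = fderiv ℝ f p w / d := by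
  simp only [div_eq_mul_inv, fderiv_mul_const (hf.add_const k), fderiv_add_const,
    smul_apply, smul_eq_mul, mul_comm]

theorem bracket_with_T_and_JT_general {E : Type*} [NormedAddCommGroup E] [NormedSpace ℝ E]
    (H : ℝ × ℝ × E → ℝ) (hH : Differentiable ℝ H)
    (T JT : ℝ × ℝ × E → ℝ × ℝ × E)
    (hT : T = fun p => ((H p + 1) / 2, -1, 0))
    (hJT : JT = fun p => ((H p - 1) / 2, -1, 0))
    (v : E) (X : ℝ × ℝ × E → ℝ × ℝ × E) (hX : X = fun _ => (0, 0, v)) :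
    lieBracketVF X T = (fun p => (fderiv ℝ H p (0, 0, v) / 2) • (T p - JT p)) ∧
    lieBracketVF X JT = (fun p => (fderiv ℝ H p (0, 0, v) / 2) • (T p - JT p)) ∧
    (∀ p, T p - JT p = ((1 : ℝ), (0 : ℝ), (0 : E))) := by
  have hTsubJT : ∀ p, T p - JT p = ((1 : ℝ), (0 : ℝ), (0 : E)) := by
    intro p
    simp only [hT, hJT, Prod.mk_sub_mk, sub_self, Prod.mk_zero_zero]
    congr 1
    ring
  have hJT' : JT = fun p => ((H p + -1) / 2, -1, 0) := by
    simp only [hJT, sub_eq_add_neg]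
  have hBracket : ∀ k : ℝ, lieBracketVF X (fun p => ((H p + k) / 2, -1, 0)) =
      fun p => (fderiv ℝ H p (0, 0, v) / 2) • ((1 : ℝ), (0 : ℝ), (0 : E)) := by
    intro k
    rw [hX, lieBracketVF_const_prodMk (by fun_prop)]
    simp only [fderiv_add_const_div_apply (hH _)]
    rfl
  refine ⟨?_, ?_, hTsubJT⟩ <;> simp only [hTsubJT]
  · rw [hT]
    exact hBracket 1
  · rw [hJT']
    exact hBracket (-1)

/-- On `ℝ × ℝ × E` with `T(p) = ((H(p)+1)/2, −1, 0)` and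
`JT(p) = ((H(p)−1)/2, −1, 0)` for a differentiable function `H` independent of
the first coordinate, every constant vector field `X ≡ (0, 0, v)` satisfies
`[X, T] = [X, JT] = ((∂_v H)/2) · (T − JT)`, where `T − JT` is the constant
vector field `(1, 0, 0)`. -/
theorem bracket_with_T_and_JT {E : Type*} [NormedAddCommGroup E] [NormedSpace ℝ E]
    (H : ℝ × ℝ × E → ℝ) (hH : Differentiable ℝ H)
    (hInd : ∀ (a a' b : ℝ) (e : E), H (a, b, e) = H (a', b, e))
    (T JT : ℝ × ℝ × E → ℝ × ℝ × E)
    (hT : T = fun p => ((H p + 1) / 2, -1, 0))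
    (hJT : JT = fun p => ((H p - 1) / 2, -1, 0))
    (v : E) (X : ℝ × ℝ × E → ℝ × ℝ × E) (hX : X = fun _ => (0, 0, v)) :
    lieBracketVF X T = (fun p => (fderiv ℝ H p (0, 0, v) / 2) • (T p - JT p)) ∧
    lieBracketVF X JT = (fun p => (fderiv ℝ H p (0, 0, v) / 2) • (T p - JT p)) ∧
    (∀ p, T p - JT p = ((1 : ℝ), (0 : ℝ), (0 : E))) :=
  bracket_with_T_and_JT_general H hH T JT hT hJT v X hX
end

section
/- Let 0 < h₀ < h_l and c₁, c₂ ∈ ℝ, and set y(h) = c₁ h⁴ + c₂ h⁻⁴ + 1. If y(h₀) = y(h_l) = 0, y′(h₀) = 2/h₀ and y′(h_l) = −2/h_l, then c₁ = −1/(h₀⁴ + h_l⁴) = −1/(4h₀⁴), c₂ = −h₀⁴ h_l⁴/(h₀⁴ + h_l⁴) = −3h₀⁴/4, and h₀⁴ + h_l⁴ = −2(h₀⁴ − h_l⁴); equivalently h_l⁴ = 3 h₀⁴, i.e., h_l = 3^{1/4} h₀. -/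
/-!
Multiplying `y(x) = 0` by `x⁴` and `y′(x) = k/x` by `x⁵` gives two linear equations in
`c₁x⁸` and `c₂`, so each endpoint alone determines `c₁` and `c₂` in terms of its own height.
Equating the two values of `c₂` forces `h_l⁴ = 3h₀⁴`, and everything else follows.
-/

theorem hasDerivAt_quartic_profile (c₁ c₂ : ℝ) {x : ℝ} (hx : x ≠ 0) :
    HasDerivAt (fun h : ℝ => c₁ * h ^ 4 + c₂ / h ^ 4 + 1)
      (4 * c₁ * x ^ 3 - 4 * c₂ / x ^ 5) x := by
  have hpow : HasDerivAt (fun h : ℝ => h ^ 4) (4 * x ^ 3) x := by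
    simpa using hasDerivAt_pow 4 x
  refine (((hpow.const_mul c₁).add ((hasDerivAt_const x c₂).div hpow
    (pow_ne_zero 4 hx))).add_const 1).congr_deriv ?_
  field_simp
  ring

theorem quartic_profile_constants_of_endpoint {c₁ c₂ x k : ℝ} (hx : x ≠ 0)
    (hval : c₁ * x ^ 4 + c₂ / x ^ 4 + 1 = 0)
    (hslope : deriv (fun h : ℝ => c₁ * h ^ 4 + c₂ / h ^ 4 + 1) x = k / x) :
    c₁ = (k - 4) / (8 * x ^ 4) ∧ c₂ = -(k + 4) * x ^ 4 / 8 := by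
  rw [(hasDerivAt_quartic_profile c₁ c₂ hx).deriv] at hslope
  have hx4 : x ^ 4 ≠ 0 := pow_ne_zero 4 hx
  have hval' : c₁ * x ^ 8 + c₂ + x ^ 4 = 0 := by
    field_simp at hval
    linear_combination hval
  have hslope' : 4 * c₁ * x ^ 8 - 4 * c₂ = k * x ^ 4 := by
    field_simp at hslope
    linear_combination hslope
  constructor
  · rw [eq_div_iff (by positivity)]
    refine mul_right_cancel₀ hx4 ?_
    linear_combination 4 * hval' + hslope'
  · linear_combination (4 * hval' - hslope') / 8

theorem eq_rpow_inv_mul_of_pow_eq {a b c : ℝ} {n : ℕ} (hn : n ≠ 0) (ha : 0 ≤ a) (hb : 0 ≤ b)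
    (hc : 0 ≤ c) (h : b ^ n = c * a ^ n) : b = c ^ ((1 : ℝ) / n) * a := by
  refine (pow_left_inj₀ hb (by positivity) hn).mp ?_
  rw [h, mul_pow, one_div, Real.rpow_inv_natCast_pow hc hn]

/-- The boundary conditions `y(h₀) = y(h_l) = 0`, `y′(h₀) = 2/h₀`,
`y′(h_l) = −2/h_l` for `y(h) = c₁ h⁴ + c₂ h⁻⁴ + 1` determine
`c₁ = −1/(h₀⁴ + h_l⁴) = −1/(4h₀⁴)`, `c₂ = −h₀⁴h_l⁴/(h₀⁴ + h_l⁴) = −3h₀⁴/4`,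
and `h₀⁴ + h_l⁴ = −2(h₀⁴ − h_l⁴)`, i.e. `h_l⁴ = 3h₀⁴`, i.e. `h_l = 3^{1/4} h₀`. -/
theorem boundary_conditions_determine_constants (h₀ hl c₁ c₂ : ℝ)
    (hh₀ : 0 < h₀) (hh₀l : h₀ < hl)
    (y : ℝ → ℝ) (hy : y = fun h => c₁ * h ^ 4 + c₂ / h ^ 4 + 1)
    (hy₀ : y h₀ = 0) (hyl : y hl = 0)
    (hy₀' : deriv y h₀ = 2 / h₀) (hyl' : deriv y hl = -2 / hl) :
    c₁ = -1 / (h₀ ^ 4 + hl ^ 4) ∧ c₁ = -1 / (4 * h₀ ^ 4) ∧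
    c₂ = -(h₀ ^ 4 * hl ^ 4) / (h₀ ^ 4 + hl ^ 4) ∧ c₂ = -3 * h₀ ^ 4 / 4 ∧
    h₀ ^ 4 + hl ^ 4 = -2 * (h₀ ^ 4 - hl ^ 4) ∧
    hl ^ 4 = 3 * h₀ ^ 4 ∧
    hl = 3 ^ ((1 : ℝ) / 4) * h₀ := by
  have hhl : 0 < hl := hh₀.trans hh₀l
  subst hy
  obtain ⟨hc₁, hc₂⟩ := quartic_profile_constants_of_endpoint hh₀.ne' hy₀ hy₀'
  obtain ⟨-, hc₂l⟩ := quartic_profile_constants_of_endpoint hhl.ne' hyl hyl'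
  have hc₁ : c₁ = -1 / (4 * h₀ ^ 4) := by rw [hc₁]; ring
  have hc₂ : c₂ = -3 * h₀ ^ 4 / 4 := by rw [hc₂]; ring
  have hl4 : hl ^ 4 = 3 * h₀ ^ 4 := by linarith
  have hsum : h₀ ^ 4 + hl ^ 4 = 4 * h₀ ^ 4 := by linarith
  refine ⟨hsum ▸ hc₁, hc₁, ?_, hc₂, by linarith, hl4,
    eq_rpow_inv_mul_of_pow_eq four_ne_zero hh₀.le hhl.le (by norm_num) (by exact_mod_cast hl4)⟩
  rw [hsum, hl4, hc₂]
  field_simp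
end

section
/- Let h₀ > 0, set h_l = 3^{1/4} h₀, and define y(h) = 1 − h⁴/(4h₀⁴) − 3h₀⁴/(4h⁴). Then there exist l > 0 and a continuous, strictly increasing function h : [0, l] → [h₀, h_l] with h(0) = h₀ and h(l) = h_l, such that h is differentiable on [0, l] and h′(t) = √(y(h(t))) for every t ∈ [0, l] (in particular h′(0) = h′(l) = 0). -/
/-!
Since `y(h₀) = y(h_l) = 0` and `y > 0` in between, the profile is the inverse of the time map
`F(x) = ∫_{h₀}^x y^{-1/2}`, which is finite because `y` vanishes only to first order at both ends:
`y(s) ≥ 4/(3h₀²) (s - h₀)(h_l - s)`. Away from the ends the inverse function theorem gives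
`h' = 1/F'(h) = √(y(h))`; at the ends `F` has infinite slope, so `h' = 0 = √(y(h))`.
-/

open Set Filter Topology MeasureTheory intervalIntegral

theorem four_mul_pow_three_mul_sub_le (w x : ℝ) : 4 * w ^ 3 * (x - w) ≤ x ^ 4 - w ^ 4 := by
  nlinarith [mul_nonneg (sq_nonneg (x - w)) (add_nonneg (sq_nonneg (x + w)) (sq_nonneg w))]

theorem Real.inv_sqrt_mul_le {p q : ℝ} (hp : 0 < p) (hq : 0 < q) :
    (√(p * q))⁻¹ ≤ (√(p + q))⁻¹ * ((√p)⁻¹ + (√q)⁻¹) := by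
  have hp' := Real.sqrt_pos.2 hp
  have hq' := Real.sqrt_pos.2 hq
  have hpq : √(p + q) ≤ √p + √q := by
    rw [Real.sqrt_le_left (by positivity), add_sq, Real.sq_sqrt hp.le, Real.sq_sqrt hq.le]
    nlinarith
  rw [Real.sqrt_mul hp.le, inv_add_inv hp'.ne' hq'.ne']
  calc (√p * √q)⁻¹ = (√(p + q))⁻¹ * (√(p + q) / (√p * √q)) := by field_simp
    _ ≤ (√(p + q))⁻¹ * ((√p + √q) / (√p * √q)) := by gcongr

theorem intervalIntegrable_inv_of_mul_sqrt_le {φ : ℝ → ℝ} {a b c : ℝ} (hab : a ≤ b) (hc : 0 < c)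
    (hφ : ContinuousOn φ (Ioo a b)) (hle : ∀ x ∈ Ioo a b, c * √((x - a) * (b - x)) ≤ φ x) :
    IntervalIntegrable (fun x => (φ x)⁻¹) volume a b := by
  have hrpow : IntervalIntegrable (fun x : ℝ => x ^ (-(1 / 2) : ℝ)) volume 0 (b - a) :=
    intervalIntegrable_rpow' (by norm_num)
  have hdom : IntervalIntegrable (fun x => (c * √(b - a))⁻¹ *
      ((x - a) ^ (-(1 / 2) : ℝ) + (b - x) ^ (-(1 / 2) : ℝ))) volume a b := by
    refine (IntervalIntegrable.add ?_ ?_).const_mul _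
    · simpa using hrpow.comp_sub_right a
    · simpa using (hrpow.comp_sub_left b).symm
  have hφpos : ∀ x ∈ Ioo a b, 0 < φ x := fun x hx =>
    (mul_pos hc (Real.sqrt_pos.2 (mul_pos (sub_pos.2 hx.1) (sub_pos.2 hx.2)))).trans_le (hle x hx)
  rw [intervalIntegrable_iff_integrableOn_Ioo_of_le hab] at hdom ⊢
  refine hdom.mono' ((hφ.inv₀ fun x hx => (hφpos x hx).ne').aestronglyMeasurable measurableSet_Ioo)
    ((ae_restrict_iff' measurableSet_Ioo).2 (.of_forall fun x hx => ?_))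
  have hxa := sub_pos.2 hx.1
  have hbx := sub_pos.2 hx.2
  rw [Real.norm_of_nonneg (inv_nonneg.2 (hφpos x hx).le), Real.rpow_neg hxa.le,
    Real.rpow_neg hbx.le, ← Real.sqrt_eq_rpow, ← Real.sqrt_eq_rpow, mul_inv, mul_assoc]
  calc (φ x)⁻¹ ≤ (c * √((x - a) * (b - x)))⁻¹ := inv_anti₀ (by positivity) (hle x hx)
    _ = c⁻¹ * (√((x - a) * (b - x)))⁻¹ := mul_inv ..
    _ ≤ c⁻¹ * ((√(b - a))⁻¹ * ((√(x - a))⁻¹ + (√(b - x))⁻¹)) := by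
      gcongr
      simpa using Real.inv_sqrt_mul_le hxa hbx

section InverseFunction

variable {α β : Type*} [ConditionallyCompleteLinearOrder α] [TopologicalSpace α] [OrderTopology α]
  [DenselyOrdered α] [LinearOrder β] [TopologicalSpace β] [OrderTopology β]

theorem StrictMonoOn.exists_continuous_invOn_Icc {f : α → β} {a b : α} (hab : a ≤ b)
    (hc : ContinuousOn f (Icc a b)) (hm : StrictMonoOn f (Icc a b)) :
    ∃ g : β → α, Continuous g ∧ StrictMonoOn g (Icc (f a) (f b)) ∧
      InvOn g f (Icc a b) (Icc (f a) (f b)) ∧ MapsTo g (Icc (f a) (f b)) (Icc a b) := by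
  let e : Icc a b ≃o Icc (f a) (f b) :=
    (hm.orderIso f _).trans (.setCongr _ _ (hc.image_Icc_of_monotoneOn hab hm.monotoneOn))
  have he : ∀ x : Icc a b, (e x : β) = f x := fun _ => rfl
  have hfab : f a ≤ f b := hm.monotoneOn (left_mem_Icc.2 hab) (right_mem_Icc.2 hab) hab
  refine ⟨IccExtend hfab (Subtype.val ∘ e.symm),
    continuous_IccExtend_iff.2 (continuous_subtype_val.comp e.symm.continuous), ?_,
    ⟨fun x hx => ?_, fun y hy => ?_⟩, fun y hy => ?_⟩
  · intro y hy y' hy' hlt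
    simp only [IccExtend_of_mem _ _ hy, IccExtend_of_mem _ _ hy', Function.comp_apply]
    exact e.symm.strictMono (Subtype.mk_lt_mk.2 hlt)
  · simp only [IccExtend_of_mem _ _ (hm.monotoneOn.mapsTo_Icc hx), Function.comp_apply]
    rw [e.symm_apply_eq.2 (Subtype.ext (he ⟨x, hx⟩).symm)]
  · simp only [IccExtend_of_mem _ _ hy, Function.comp_apply]
    rw [← he, e.apply_symm_apply]
  · simp only [IccExtend_of_mem _ _ hy, Function.comp_apply]
    exact (e.symm _).2

end InverseFunction

theorem HasDerivWithinAt.of_leftInvOn_of_tendsto_slope_atTop {f g : ℝ → ℝ} {s t : Set ℝ}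
    {a : ℝ} (ha : a ∈ s) (hg : Tendsto g (𝓝[s \ {a}] a) (𝓝[t \ {g a}] (g a)))
    (hf : Tendsto (slope f (g a)) (𝓝[t \ {g a}] (g a)) atTop) (hfg : LeftInvOn f g s) :
    HasDerivWithinAt g 0 s a := by
  rw [hasDerivWithinAt_iff_tendsto_slope]
  refine (hf.comp hg).inv_tendsto_atTop.congr' ?_
  filter_upwards [self_mem_nhdsWithin] with y hy
  simp [slope_def_field, hfg hy.1, hfg ha]

theorem IntervalIntegrable.mono_of_mem_Icc {E : Type*} [NormedAddCommGroup E] {g : ℝ → E}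
    {μ : Measure ℝ} {a b p q : ℝ} (hg : IntervalIntegrable g μ a b) (hp : p ∈ Icc a b)
    (hq : q ∈ Icc a b) : IntervalIntegrable g μ p q :=
  hg.mono_set (uIcc_subset_uIcc (Icc_subset_uIcc hp) (Icc_subset_uIcc hq))

theorem le_slope_primitive {g : ℝ → ℝ} {a p q M : ℝ} (hpq : p < q)
    (hap : IntervalIntegrable g volume a p) (hpq' : IntervalIntegrable g volume p q)
    (hM : ∀ x ∈ Ioo p q, M ≤ g x) :
    M ≤ slope (fun x => ∫ s in a..x, g s) p q := by
  rw [slope_def_field, integral_interval_sub_left (hap.trans hpq') hap,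
    le_div_iff₀ (sub_pos.2 hpq)]
  calc M * (q - p) = ∫ _ in p..q, M := by simp [mul_comm]
    _ ≤ ∫ x in p..q, g x := integral_mono_on_of_le_Ioo hpq.le intervalIntegrable_const hpq' hM

theorem tendsto_slope_primitive_atTop {g : ℝ → ℝ} {a b x₀ : ℝ}
    (hg : IntervalIntegrable g volume a b) (hx₀ : x₀ ∈ Icc a b)
    (hlim : Tendsto g (𝓝[Icc a b \ {x₀}] x₀) atTop) :
    Tendsto (slope (fun x => ∫ s in a..x, g s) x₀) (𝓝[Icc a b \ {x₀}] x₀) atTop := by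
  refine tendsto_atTop.2 fun M => ?_
  obtain ⟨δ, hδ, hM⟩ :=
    Metric.eventually_nhds_iff.1 (eventually_nhdsWithin_iff.1 (tendsto_atTop.1 hlim M))
  have ha : a ∈ Icc a b := left_mem_Icc.2 (hx₀.1.trans hx₀.2)
  filter_upwards [self_mem_nhdsWithin, nhdsWithin_le_nhds (Metric.ball_mem_nhds x₀ hδ)]
    with x ⟨hx, hxx₀⟩ hxδ
  rw [Metric.mem_ball, Real.dist_eq, abs_lt] at hxδ
  rcases lt_or_gt_of_ne hxx₀ with hlt | hgt
  · rw [slope_comm]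
    refine le_slope_primitive hlt (hg.mono_of_mem_Icc ha hx) (hg.mono_of_mem_Icc hx hx₀)
      fun z hz => hM ?_ ⟨⟨hx.1.trans hz.1.le, hz.2.le.trans hx₀.2⟩, hz.2.ne⟩
    rw [Real.dist_eq, abs_lt]
    constructor <;> linarith [hz.1, hz.2]
  · refine le_slope_primitive hgt (hg.mono_of_mem_Icc ha hx₀) (hg.mono_of_mem_Icc hx₀ hx)
      fun z hz => hM ?_ ⟨⟨hx₀.1.trans hz.1.le, hz.2.le.trans hx.2⟩, hz.1.ne'⟩
    rw [Real.dist_eq, abs_lt]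
    constructor <;> linarith [hz.1, hz.2]

theorem strictMonoOn_primitive {g : ℝ → ℝ} {a b : ℝ} (hg : IntervalIntegrable g volume a b)
    (hpos : ∀ x ∈ Ioo a b, 0 < g x) : StrictMonoOn (fun x => ∫ s in a..x, g s) (Icc a b) := by
  intro p hp q hq hpq
  have ha : a ∈ Icc a b := left_mem_Icc.2 (hp.1.trans hp.2)
  rw [← sub_pos, integral_interval_sub_left (hg.mono_of_mem_Icc ha hq) (hg.mono_of_mem_Icc ha hp)]
  exact intervalIntegral_pos_of_pos_on (hg.mono_of_mem_Icc hp hq)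
    (fun x hx => hpos x ⟨hp.1.trans_lt hx.1, hx.2.trans_le hq.2⟩) hpq

theorem hasDerivWithinAt_zero_of_leftInvOn_primitive {φ h : ℝ → ℝ} {a b t : ℝ} {s : Set ℝ}
    (hint : IntervalIntegrable (fun x => (φ x)⁻¹) volume a b) (hφ : ContinuousOn φ (Icc a b))
    (hh : ContinuousWithinAt h s t) (hinj : InjOn h s) (hmaps : MapsTo h s (Icc a b))
    (hinv : LeftInvOn (fun x => ∫ u in a..x, (φ u)⁻¹) h s) (ht : t ∈ s) (hzero : φ (h t) = 0)
    (hpos : ∀ᶠ x in 𝓝[Icc a b \ {h t}] h t, 0 < φ x) :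
    HasDerivWithinAt h 0 s t := by
  have hφt : Tendsto φ (𝓝[Icc a b \ {h t}] h t) (𝓝[>] 0) :=
    tendsto_nhdsWithin_of_tendsto_nhds_of_eventually_within _
      (hzero ▸ (hφ _ (hmaps ht)).mono sdiff_subset) hpos
  refine .of_leftInvOn_of_tendsto_slope_atTop ht ?_
    (tendsto_slope_primitive_atTop hint (hmaps ht) (tendsto_inv_nhdsGT_zero.comp hφt)) hinv
  refine tendsto_nhdsWithin_of_tendsto_nhds_of_eventually_within _ (hh.mono sdiff_subset) ?_
  filter_upwards [self_mem_nhdsWithin] with x ⟨hx, hxt⟩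
  exact ⟨hmaps hx, fun hxt' => hxt (hinj hx ht hxt')⟩

theorem hasDerivAt_of_leftInvOn_primitive {φ h : ℝ → ℝ} {a b t : ℝ}
    (hint : IntervalIntegrable (fun x => (φ x)⁻¹) volume a b) (hφ : ContinuousOn φ (Icc a b))
    (hpos : ∀ x ∈ Ioo a b, 0 < φ x) (hh : ContinuousAt h t) (hht : h t ∈ Ioo a b)
    (hinv : ∀ᶠ y in 𝓝 t, ∫ u in a..h y, (φ u)⁻¹ = y) :
    HasDerivAt h (φ (h t)) t := by
  have hcont : ContinuousOn (fun x => (φ x)⁻¹) (Ioo a b) :=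
    (hφ.mono Ioo_subset_Icc_self).inv₀ fun x hx => (hpos x hx).ne'
  have hF := integral_hasDerivAt_right
    (hint.mono_of_mem_Icc (left_mem_Icc.2 (hht.1.le.trans hht.2.le)) (Ioo_subset_Icc_self hht))
    (hcont.stronglyMeasurableAtFilter isOpen_Ioo _ hht)
    (hcont.continuousAt (isOpen_Ioo.mem_nhds hht))
  simpa using hF.of_local_left_inverse hh (inv_ne_zero (hpos _ hht).ne') hinv

theorem exists_strictMonoOn_solution_of_intervalIntegrable_inv {φ : ℝ → ℝ} {a b : ℝ}
    (hab : a < b) (hφ : ContinuousOn φ (Icc a b)) (hpos : ∀ x ∈ Ioo a b, 0 < φ x)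
    (ha : φ a = 0) (hb : φ b = 0) (hint : IntervalIntegrable (fun x => (φ x)⁻¹) volume a b) :
    ∃ l, 0 < l ∧ ∃ h : ℝ → ℝ, ContinuousOn h (Icc 0 l) ∧ StrictMonoOn h (Icc 0 l) ∧
      MapsTo h (Icc 0 l) (Icc a b) ∧ h 0 = a ∧ h l = b ∧
      ∀ t ∈ Icc 0 l, HasDerivWithinAt h (φ (h t)) (Icc 0 l) t := by
  set F : ℝ → ℝ := fun x => ∫ u in a..x, (φ u)⁻¹
  have haI : a ∈ Icc a b := left_mem_Icc.2 hab.le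
  have hbI : b ∈ Icc a b := right_mem_Icc.2 hab.le
  have hFmono : StrictMonoOn F (Icc a b) :=
    strictMonoOn_primitive hint fun x hx => inv_pos.2 (hpos x hx)
  have hFcont : ContinuousOn F (Icc a b) := by
    have := continuousOn_primitive_interval (μ := volume) (a := a) (b := b) (f := fun x => (φ x)⁻¹)
    rw [uIcc_of_le hab.le] at this
    exact this ((intervalIntegrable_iff_integrableOn_Icc_of_le hab.le).1 hint)
  obtain ⟨h, hcont, hmono, hinv, hmaps⟩ := hFmono.exists_continuous_invOn_Icc hab.le hFcont
  have hFa : F a = 0 := integral_same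
  rw [hFa] at hmono hinv hmaps
  have h0 : h 0 = a := hFa ▸ hinv.1 haI
  have hl : h (F b) = b := hinv.1 hbI
  refine ⟨F b, hFa ▸ hFmono haI hbI hab, h, hcont.continuousOn, hmono, hmaps, h0, hl,
    fun t ht => ?_⟩
  have hend : φ (h t) = 0 → (∀ᶠ x in 𝓝[Icc a b \ {h t}] h t, 0 < φ x) →
      HasDerivWithinAt h (φ (h t)) (Icc 0 (F b)) t := fun hzero hnear =>
    hzero ▸ hasDerivWithinAt_zero_of_leftInvOn_primitive hint hφ hcont.continuousWithinAt
      hmono.injOn hmaps hinv.2 ht hzero hnear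
  rcases ht.1.eq_or_lt with rfl | h0t
  · refine hend (h0 ▸ ha) ?_
    rw [h0, Icc_sdiff_left, nhdsWithin_Ioc_eq_nhdsGT hab, ← nhdsWithin_Ioo_eq_nhdsGT hab]
    exact eventually_nhdsWithin_of_forall hpos
  rcases ht.2.eq_or_lt with rfl | htl
  · refine hend (by rw [hl, hb]) ?_
    rw [hl, Icc_sdiff_right, nhdsWithin_Ico_eq_nhdsLT hab, ← nhdsWithin_Ioo_eq_nhdsLT hab]
    exact eventually_nhdsWithin_of_forall hpos
  refine (hasDerivAt_of_leftInvOn_primitive hint hφ hpos hcont.continuousAt ?_ ?_).hasDerivWithinAt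
  · exact ⟨h0 ▸ hmono ⟨le_rfl, ht.1.trans ht.2⟩ ht h0t, hl ▸ hmono ht ⟨ht.1.trans ht.2, le_rfl⟩ htl⟩
  · filter_upwards [Icc_mem_nhds h0t htl] with y hy using hinv.2 hy

noncomputable def profileY (a s : ℝ) : ℝ := 1 - s ^ 4 / (4 * a ^ 4) - 3 * a ^ 4 / (4 * s ^ 4)

section ProfileY

variable {a b s : ℝ}

theorem profileY_eq (ha : a ≠ 0) (hb : b ^ 4 = 3 * a ^ 4) (hs : s ≠ 0) :
    profileY a s = (s ^ 4 - a ^ 4) * (b ^ 4 - s ^ 4) / (4 * a ^ 4 * s ^ 4) := by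
  rw [profileY, hb]
  field_simp
  ring

theorem mul_sub_mul_sub_le_profileY (ha : 0 < a) (hb : b ^ 4 = 3 * a ^ 4) (hs : s ∈ Icc a b) :
    4 / (3 * a ^ 2) * ((s - a) * (b - s)) ≤ profileY a s := by
  have hs0 : 0 < s := ha.trans_le hs.1
  have hsa := sub_nonneg.2 hs.1
  have hbs := sub_nonneg.2 hs.2
  rw [profileY_eq ha.ne' hb hs0.ne', le_div_iff₀ (by positivity)]
  calc 4 / (3 * a ^ 2) * ((s - a) * (b - s)) * (4 * a ^ 4 * s ^ 4)
      = 16 * a ^ 2 * s ^ 4 * ((s - a) * (b - s)) / 3 := by field_simp; ring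
    _ ≤ 16 * a ^ 2 * b ^ 4 * ((s - a) * (b - s)) / 3 := by gcongr; exact hs.2
    _ = (4 * a ^ 3 * (s - a)) * (4 * a ^ 3 * (b - s)) := by rw [hb]; ring
    _ ≤ (s ^ 4 - a ^ 4) * (b ^ 4 - s ^ 4) := by
      gcongr
      · exact sub_nonneg.2 (pow_le_pow_left₀ ha.le hs.1 4)
      · exact four_mul_pow_three_mul_sub_le a s
      · calc 4 * a ^ 3 * (b - s) ≤ 4 * s ^ 3 * (b - s) := by gcongr; exact hs.1
          _ ≤ b ^ 4 - s ^ 4 := four_mul_pow_three_mul_sub_le s b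

theorem exists_strictMonoOn_solution_profileY (ha : 0 < a) (hb : b ^ 4 = 3 * a ^ 4) (hab : a < b) :
    ∃ l, 0 < l ∧ ∃ h : ℝ → ℝ, ContinuousOn h (Icc 0 l) ∧ StrictMonoOn h (Icc 0 l) ∧
      MapsTo h (Icc 0 l) (Icc a b) ∧ h 0 = a ∧ h l = b ∧
      ∀ t ∈ Icc 0 l, HasDerivWithinAt h (√(profileY a (h t))) (Icc 0 l) t := by
  have hbound := fun (s : ℝ) (hs : s ∈ Icc a b) => mul_sub_mul_sub_le_profileY ha hb hs
  have hcont : ContinuousOn (fun s => √(profileY a s)) (Icc a b) := by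
    unfold profileY
    fun_prop (disch := intro s hs; have := ha.trans_le hs.1; positivity)
  refine exists_strictMonoOn_solution_of_intervalIntegrable_inv hab hcont (fun s hs => ?_)
    ?_ ?_ ?_
  · have := sub_pos.2 hs.1
    have := sub_pos.2 hs.2
    exact Real.sqrt_pos.2 (lt_of_lt_of_le (by positivity) (hbound s (Ioo_subset_Icc_self hs)))
  · simp [profileY_eq ha.ne' hb ha.ne']
  · simp [profileY_eq ha.ne' hb (ha.trans hab).ne']
  refine intervalIntegrable_inv_of_mul_sqrt_le hab.le (c := √(4 / (3 * a ^ 2)))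
    (by positivity) (hcont.mono Ioo_subset_Icc_self) fun s hs => ?_
  rw [← Real.sqrt_mul (by positivity)]
  exact Real.sqrt_le_sqrt (hbound s (Ioo_subset_Icc_self hs))

end ProfileY

/-- For `h₀ > 0`, `h_l = 3^{1/4} h₀` and
`y(h) = 1 − h⁴/(4h₀⁴) − 3h₀⁴/(4h⁴)`, there exist `l > 0` and a continuous,
strictly increasing profile function `h : [0, l] → [h₀, h_l]` with
`h(0) = h₀`, `h(l) = h_l`, differentiable on `[0, l]` with
`h′(t) = √(y(h(t)))` for every `t ∈ [0, l]`. -/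
theorem profile_function_exists (h₀ hl : ℝ) (hh₀ : 0 < h₀)
    (hhl : hl = 3 ^ ((1 : ℝ) / 4) * h₀)
    (y : ℝ → ℝ)
    (hy : y = fun h => 1 - h ^ 4 / (4 * h₀ ^ 4) - 3 * h₀ ^ 4 / (4 * h ^ 4)) :
    ∃ l : ℝ, 0 < l ∧ ∃ h : ℝ → ℝ,
      ContinuousOn h (Set.Icc 0 l) ∧
      StrictMonoOn h (Set.Icc 0 l) ∧
      Set.MapsTo h (Set.Icc 0 l) (Set.Icc h₀ hl) ∧
      h 0 = h₀ ∧ h l = hl ∧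
      ∀ t ∈ Set.Icc 0 l,
        HasDerivWithinAt h (Real.sqrt (y (h t))) (Set.Icc 0 l) t := by
  subst hhl hy
  have hl4 : (3 ^ ((1 : ℝ) / 4) * h₀) ^ 4 = 3 * h₀ ^ 4 := by
    rw [mul_pow, ← Real.rpow_natCast, ← Real.rpow_mul (by norm_num)]
    norm_num
  exact exists_strictMonoOn_solution_profileY hh₀ hl4
    (lt_mul_of_one_lt_left hh₀ (Real.one_lt_rpow (by norm_num) (by norm_num)))
end

section
/- Let h₀ > 0, h_l = 3^{1/4} h₀, y(h) = 1 − h⁴/(4h₀⁴) − 3h₀⁴/(4h⁴), and let h : [0, l] → [h₀, h_l] be strictly increasing and differentiable with h(0) = h₀, h(l) = h_l and h′(t) = √(y(h(t))) for all t ∈ [0, l]. Then h′ is differentiable on [0, l] (one-sidedly at the endpoints) with h″(t) = y′(h(t))/2 for every t ∈ [0, l]; in particular the boundary conditions h″(0) = 1/h(0) and h″(l) = −1/h(l) hold. -/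
/-!
In the interior of `[0, l]` the profile `h` lies strictly between the two zeros `h₀` and `h_l`
of `y`, so `y (h t) > 0` and the chain rule gives
`(√(y ∘ h))′ = y′(h) · √(y (h)) / (2 √(y (h))) = y′(h) / 2`.
At the endpoints `√` is not differentiable at `y (h t) = 0`, but `√(y ∘ h)` is continuous on
`[0, l]` and its interior derivative `y′(h) / 2` extends continuously to `[0, l]`, so by the
mean value theorem the one-sided derivatives exist and equal that extension.
The boundary values are `y′(h₀) = 2 / h₀` and, since `h_l⁴ = 3 h₀⁴`,
`y′(h_l) = -2 / h_l`.
-/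

open Set Filter Topology

theorem hasDerivWithinAt_Icc_of_hasDerivAt_Ioo {E : Type*} [NormedAddCommGroup E]
    [NormedSpace ℝ E] {f g : ℝ → E} {a b t : ℝ} (hab : a < b)
    (hf : ContinuousOn f (Icc a b)) (hg : ContinuousOn g (Icc a b))
    (hfg : ∀ s ∈ Ioo a b, HasDerivAt f (g s) s) (ht : t ∈ Icc a b) :
    HasDerivWithinAt f (g t) (Icc a b) t := by
  rw [hasDerivWithinAt_iff_hasFDerivWithinAt, ← closure_Ioo hab.ne]
  refine hasFDerivWithinAt_closure_of_tendsto_fderiv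
    (fun s hs => (hfg s hs).differentiableAt.differentiableWithinAt) (convex_Ioo a b) isOpen_Ioo
    (fun s hs => (hf s (closure_Ioo hab.ne ▸ hs)).mono Ioo_subset_Icc_self) ?_
  have hlim : Tendsto g (𝓝[Ioo a b] t) (𝓝 (g t)) := (hg t ht).mono Ioo_subset_Icc_self
  refine Tendsto.congr'
    (eventually_nhdsWithin_of_forall fun s hs => (hfg s hs).hasFDerivAt.fderiv.symm) ?_
  exact ((ContinuousLinearMap.smulRightL ℝ ℝ E 1).continuous.tendsto _).comp hlim

theorem HasDerivAt.sqrt_comp_of_hasDerivAt_eq_sqrt {y h : ℝ → ℝ} {t y' : ℝ}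
    (hh : HasDerivAt h √(y (h t)) t) (hy : HasDerivAt y y' (h t)) (hpos : 0 < y (h t)) :
    HasDerivAt (fun s => √(y (h s))) (y' / 2) t := by
  refine ((hy.comp t hh).sqrt hpos.ne').congr_deriv ?_
  have : √(y (h t)) ≠ 0 := (Real.sqrt_pos.mpr hpos).ne'
  simp only [Function.comp_apply]
  field_simp

noncomputable def closingPotential (h₀ x : ℝ) : ℝ :=
  1 - x ^ 4 / (4 * h₀ ^ 4) - 3 * h₀ ^ 4 / (4 * x ^ 4)

section closingPotential

variable {h₀ x : ℝ}

theorem hasDerivAt_closingPotential (hh₀ : h₀ ≠ 0) (hx : x ≠ 0) :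
    HasDerivAt (closingPotential h₀) (-x ^ 3 / h₀ ^ 4 + 3 * h₀ ^ 4 / x ^ 5) x := by
  have hpow : HasDerivAt (fun x : ℝ => x ^ 4) (4 * x ^ 3) x := by
    simpa using hasDerivAt_pow 4 x
  refine (((hasDerivAt_const x 1).sub (hpow.div_const (4 * h₀ ^ 4))).sub
    ((hasDerivAt_const x (3 * h₀ ^ 4)).div (hpow.const_mul 4) (by positivity))).congr_deriv ?_
  field_simp
  ring

theorem continuousOn_closingPotential (hh₀ : h₀ ≠ 0) :
    ContinuousOn (closingPotential h₀) {0}ᶜ :=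
  fun _ hx => (hasDerivAt_closingPotential hh₀ hx).continuousAt.continuousWithinAt

theorem continuousOn_deriv_closingPotential (hh₀ : h₀ ≠ 0) :
    ContinuousOn (deriv (closingPotential h₀)) {0}ᶜ := by
  refine ContinuousOn.congr (f := fun x => -x ^ 3 / h₀ ^ 4 + 3 * h₀ ^ 4 / x ^ 5) ?_
    fun x hx => (hasDerivAt_closingPotential hh₀ hx).deriv
  exact (continuousOn_id.pow 3).neg.div_const _ |>.add <|
    continuousOn_const.div (continuousOn_id.pow 5) fun x hx => pow_ne_zero 5 hx

theorem closingPotential_pos (hh₀ : 0 < h₀) (hx₀ : h₀ < x) (hx : x ^ 4 < 3 * h₀ ^ 4) :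
    0 < closingPotential h₀ x := by
  have hx0 : 0 < x := hh₀.trans hx₀
  have hfactor : closingPotential h₀ x =
      (x ^ 4 - h₀ ^ 4) * (3 * h₀ ^ 4 - x ^ 4) / (4 * h₀ ^ 4 * x ^ 4) := by
    unfold closingPotential
    field_simp
    ring
  have : h₀ ^ 4 < x ^ 4 := by gcongr
  rw [hfactor]
  exact div_pos (mul_pos (by linarith) (by linarith)) (by positivity)

theorem deriv_closingPotential_self (hh₀ : h₀ ≠ 0) :
    deriv (closingPotential h₀) h₀ = 2 / h₀ := by
  rw [(hasDerivAt_closingPotential hh₀ hh₀).deriv]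
  field_simp
  ring

theorem deriv_closingPotential_of_pow_four_eq (hx0 : x ≠ 0) (hx : x ^ 4 = 3 * h₀ ^ 4) :
    deriv (closingPotential h₀) x = -2 / x := by
  have hh₀ : h₀ ≠ 0 := by rintro rfl; simp_all
  rw [(hasDerivAt_closingPotential hh₀ hx0).deriv]
  field_simp
  linear_combination (-(x ^ 4 + h₀ ^ 4)) * hx

end closingPotential

/-- For a profile function `h : [0, l] → [h₀, h_l]` solving
`h′ = √(y(h))` with `y(h) = 1 − h⁴/(4h₀⁴) − 3h₀⁴/(4h⁴)` and `h_l = 3^{1/4}h₀`,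
the derivative `h′ = √(y(h))` is itself differentiable on `[0, l]`
(one-sidedly at the endpoints) with `h″(t) = y′(h(t))/2`; in particular the
smooth-closing boundary conditions `h″(0) = 1/h(0)` and `h″(l) = −1/h(l)` hold. -/
theorem profile_second_derivative (h₀ hl : ℝ) (hh₀ : 0 < h₀)
    (hhl : hl = 3 ^ ((1 : ℝ) / 4) * h₀)
    (y : ℝ → ℝ)
    (hy : y = fun h => 1 - h ^ 4 / (4 * h₀ ^ 4) - 3 * h₀ ^ 4 / (4 * h ^ 4))
    (l : ℝ) (hl0 : 0 < l) (h : ℝ → ℝ)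
    (hmono : StrictMonoOn h (Set.Icc 0 l))
    (hmap : Set.MapsTo h (Set.Icc 0 l) (Set.Icc h₀ hl))
    (h0 : h 0 = h₀) (hle : h l = hl)
    (hderiv : ∀ t ∈ Set.Icc 0 l,
      HasDerivWithinAt h (Real.sqrt (y (h t))) (Set.Icc 0 l) t) :
    (∀ t ∈ Set.Icc 0 l,
      HasDerivWithinAt (fun s => Real.sqrt (y (h s)))
        (deriv y (h t) / 2) (Set.Icc 0 l) t) ∧
    deriv y (h 0) / 2 = 1 / h 0 ∧
    deriv y (h l) / 2 = -(1 / h l) := by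
  obtain rfl : y = closingPotential h₀ := hy
  have hl4 : hl ^ 4 = 3 * h₀ ^ 4 := by
    have h34 : ((3 : ℝ) ^ (4⁻¹ : ℝ)) ^ 4 = 3 := by
      exact_mod_cast Real.rpow_inv_natCast_pow (by norm_num : (0 : ℝ) ≤ 3) four_ne_zero
    rw [hhl, mul_pow, one_div, h34]
  have hlpos : 0 < hl := by rw [hhl]; positivity
  have hcont : ContinuousOn h (Icc 0 l) := fun t ht => (hderiv t ht).continuousWithinAt
  have hmap0 : MapsTo h (Icc 0 l) {0}ᶜ := fun t ht => (hh₀.trans_le (hmap ht).1).ne'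
  have hinterior : ∀ s ∈ Ioo 0 l, HasDerivAt (fun s => √(closingPotential h₀ (h s)))
      (deriv (closingPotential h₀) (h s) / 2) s := by
    intro s hs
    have hs' : s ∈ Icc 0 l := Ioo_subset_Icc_self hs
    have hlt₀ : h₀ < h s := h0 ▸ hmono (left_mem_Icc.2 hl0.le) hs' hs.1
    have hlt : h s < hl := hle ▸ hmono hs' (right_mem_Icc.2 hl0.le) hs.2
    have hlt4 : h s ^ 4 < 3 * h₀ ^ 4 :=
      hl4 ▸ pow_lt_pow_left₀ hlt (hh₀.trans hlt₀).le four_ne_zero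
    exact ((hderiv s hs').hasDerivAt (Icc_mem_nhds hs.1 hs.2)).sqrt_comp_of_hasDerivAt_eq_sqrt
      (hasDerivAt_closingPotential hh₀.ne' (hh₀.trans hlt₀).ne').differentiableAt.hasDerivAt
      (closingPotential_pos hh₀ hlt₀ hlt4)
  refine ⟨fun t ht => hasDerivWithinAt_Icc_of_hasDerivAt_Ioo hl0 ?_ ?_ hinterior ht, ?_, ?_⟩
  · exact Real.continuous_sqrt.comp_continuousOn
      ((continuousOn_closingPotential hh₀.ne').comp hcont hmap0)
  · exact ((continuousOn_deriv_closingPotential hh₀.ne').comp hcont hmap0).div_const 2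
  · rw [h0, deriv_closingPotential_self hh₀.ne']
    ring
  · rw [hle, deriv_closingPotential_of_pow_four_eq hlpos.ne' hl4]
    ring
end
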